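/- Let r_q denote the largest real root of P_q(z) = z³ - (2q^{-2} + 3 + 2q²)z² + 2(q^{-2} + 1 + q²)z - 2 for 0 < q < 1. Then 2q^{-2} + 2 + q² ≤ r_q ≤ 2q^{-2} + 2 + q²(3 - 2q²)/(1 - q²)². -/
import Mathlib
set_option maxHeartbeats 1600000


noncomputable def P (q z : ℝ) : ℝ :=
  z ^ 3 - (2 * q⁻¹ ^ 2 + 3 + 2 * q ^ 2) * z ^ 2 + 2 * (q⁻¹ ^ 2 + 1 + q ^ 2) * z - 2

theorem stmt_19 (q : ℝ) (hq : 0 < q) (hq1 : q < 1) (r : ℝ)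
    (hr : IsGreatest {z : ℝ | P q z = 0} r) :
    2 * q⁻¹ ^ 2 + 2 + q ^ 2 ≤ r ∧
      r ≤ 2 * q⁻¹ ^ 2 + 2 + q ^ 2 * (3 - 2 * q ^ 2) / (1 - q ^ 2) ^ 2 := by
  obtain ⟨hrmem, hub⟩ := hr
  obtain ⟨u, hu⟩ : ∃ u : ℝ, q ^ 2 = u := ⟨_, rfl⟩
  have hu0 : (0:ℝ) < u := by rw [← hu]; positivity
  have hu1 : u < 1 := by rw [← hu]; nlinarith
  have hune : u ≠ 0 := ne_of_gt hu0
  have h1u : (1:ℝ) - u ≠ 0 := by intro h; nlinarith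
  have hqinv : q⁻¹ ^ 2 = u⁻¹ := by rw [inv_pow, hu]
  have hsinv : (0:ℝ) < u⁻¹ := by positivity
  have hs1 : 1 < u⁻¹ := by rw [lt_inv_comm₀ one_pos hu0]; simpa using hu1
  have hus : u * u⁻¹ = 1 := mul_inv_cancel₀ hune
  have hP : ∀ z, P q z =
      z ^ 3 - (2 * u⁻¹ + 3 + 2 * u) * z ^ 2 + 2 * (u⁻¹ + 1 + u) * z - 2 := by
    intro z; unfold P; rw [hqinv, hu]
  -- lower bound
  have ha : P q (2 * u⁻¹ + 2 + u) < 0 := by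
    have heq : P q (2 * u⁻¹ + 2 + u) = -(4 * u⁻¹ + 8 + 6 * u + 3 * u ^ 2 + u ^ 3) := by
      rw [hP]
      field_simp
      ring
    rw [heq]
    nlinarith [pow_pos hu0 2, pow_pos hu0 3]
  have hC : 0 < P q (2 * u⁻¹ + 3 + 2 * u) := by
    have heq : P q (2 * u⁻¹ + 3 + 2 * u) =
        2 * (u⁻¹ + 1 + u) * (2 * u⁻¹ + 3 + 2 * u) - 2 := by
      rw [hP]; ring
    rw [heq]
    nlinarith
  have haC : (2 : ℝ) * u⁻¹ + 2 + u ≤ 2 * u⁻¹ + 3 + 2 * u := by linarith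
  have hcont : ContinuousOn (P q) (Set.Icc (2 * u⁻¹ + 2 + u) (2 * u⁻¹ + 3 + 2 * u)) := by
    unfold P; fun_prop
  have hiv := intermediate_value_Icc haC hcont
  obtain ⟨c, hc, hc0⟩ := hiv ⟨le_of_lt ha, le_of_lt hC⟩
  have hrc : c ≤ r := hub hc0
  have hlow : 2 * q⁻¹ ^ 2 + 2 + q ^ 2 ≤ r := by
    have := hc.1
    rw [hqinv, hu]
    linarith
  refine ⟨hlow, ?_⟩
  -- upper bound
  set b : ℝ := 2 * u⁻¹ + 2 + u * (3 - 2 * u) / (1 - u) ^ 2 with hbdef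
  have h1u2 : (0:ℝ) < (1 - u) ^ 2 := by positivity
  have hab : 2 * u⁻¹ + 2 + u ≤ b := by
    have : u ≤ u * (3 - 2 * u) / (1 - u) ^ 2 := by
      rw [le_div_iff₀ h1u2]
      nlinarith
    simp only [hbdef]
    linarith
  have hbpos : 0 < P q b := by
    have heq : u * (1 - u) ^ 6 * P q b =
        4 - 4 * u - 2 * u ^ 2 + 7 * u ^ 3 - 5 * u ^ 4 + u ^ 5 := by
      rw [hP]
      simp only [hbdef]
      field_simp
      ring
    have hpos : (0:ℝ) < 4 - 4 * u - 2 * u ^ 2 + 7 * u ^ 3 - 5 * u ^ 4 + u ^ 5 := by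
      nlinarith [pow_pos hu0 3, pow_pos hu0 5, sq_nonneg (1 - u),
        sq_nonneg (u * (1 - u)), sq_nonneg (u ^ 2 * (1 - u))]
    have hfac : (0:ℝ) < u * (1 - u) ^ 6 := by positivity
    have h3 : 0 < u * (1 - u) ^ 6 * P q b := by rw [heq]; exact hpos
    by_contra hnb
    push_neg at hnb
    have := mul_nonpos_of_nonneg_of_nonpos (le_of_lt hfac) hnb
    linarith
  by_contra hcon
  push_neg at hcon
  have hbr : b < r := by
    rw [hqinv, hu] at hcon
    simpa [hbdef] using hcon
  have hra : 2 * u⁻¹ + 2 + u ≤ r := by rw [hqinv, hu] at hlow; linarith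
  have hkey : P q r - P q b =
      (r - b) * (r ^ 2 + r * b + b ^ 2 - (2 * u⁻¹ + 3 + 2 * u) * (r + b)
        + 2 * (u⁻¹ + 1 + u)) := by
    rw [hP, hP]; ring
  have hPr : P q r = 0 := hrmem
  have hQ : 0 < r ^ 2 + r * b + b ^ 2 - (2 * u⁻¹ + 3 + 2 * u) * (r + b)
      + 2 * (u⁻¹ + 1 + u) := by
    have hident : r ^ 2 + r * b + b ^ 2 - (2 * u⁻¹ + 3 + 2 * u) * (r + b)
        + 2 * (u⁻¹ + 1 + u) =
        4 * u⁻¹ ^ 2 + 6 * u⁻¹ - u ^ 2 + 2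
          + ((r - (2 * u⁻¹ + 2 + u)) ^ 2
            + (r - (2 * u⁻¹ + 2 + u)) * (b - (2 * u⁻¹ + 2 + u))
            + (b - (2 * u⁻¹ + 2 + u)) ^ 2
            + (4 * u⁻¹ + 3 + u) * ((r - (2 * u⁻¹ + 2 + u)) + (b - (2 * u⁻¹ + 2 + u)))) := by
      ring
    rw [hident]
    have h1 : (0:ℝ) ≤ r - (2 * u⁻¹ + 2 + u) := by linarith
    have h2 : (0:ℝ) ≤ b - (2 * u⁻¹ + 2 + u) := by linarith
    have h3 : (0:ℝ) ≤ 4 * u⁻¹ + 3 + u := by linarith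
    have hu2 : u ^ 2 < 1 := by nlinarith
    linarith [mul_nonneg h1 h2, sq_nonneg (r - (2 * u⁻¹ + 2 + u)),
      sq_nonneg (b - (2 * u⁻¹ + 2 + u)), mul_nonneg h3 (add_nonneg h1 h2),
      sq_nonneg u⁻¹]
  have hprod : 0 < (r - b) * (r ^ 2 + r * b + b ^ 2 - (2 * u⁻¹ + 3 + 2 * u) * (r + b)
      + 2 * (u⁻¹ + 1 + u)) := mul_pos (by linarith) hQ
  linarith [hkey, hPr, hbpos]
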